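/- Let α ≥ 0 be a real constant. Suppose g : [0,1] → ℝ is twice continuously differentiable, not identically zero, and satisfies −g″(z) = Λ g(z) for all z ∈ [0,1] together with the Robin boundary conditions −g′(0) + α g(0) = 0 and g′(1) + α g(1) = 0, for some real number Λ. Then Λ ≥ ((−α + √(α² + 8π²α)) / (4π))². -/

import Mathlib

open Real Set

/-!
For `0 ≤ b < π` the function `φ t = -b tan (b (t - 1/2))` is the logarithmic derivative of
`cos (b (t - 1/2))` and solves the Riccati equation `φ' = -b² - φ²` on `[0, 1]`. Completing the
square, `∫ g'² - b² ∫ g² = ∫ (g' - φ g)² + [φ g²]₀¹`, while integrating `-g'' = Λ g` against `g`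
gives `∫ g'² - Λ ∫ g² = -α (g 0² + g 1²)`. Since `φ 0 = -φ 1 = b tan (b/2)`, this yields
`(Λ - b²) ∫ g² ≥ (α - b tan (b/2)) (g 0² + g 1²)`, and the constant `b` of the statement is the
positive root of `2π b² + α b = π α`, which forces `b tan (b/2) ≤ α` via `sin x ≤ x` and Jordan's
inequality `cos x ≥ 1 - 2x/π`.
-/

section Integrals

variable {a b : ℝ} {g g' g'' φ : ℝ → ℝ}

theorem integral_deriv_sq_eq_of_neg_deriv2_eq {Λ : ℝ} (hab : a ≤ b)
    (hg : ∀ x ∈ Icc a b, HasDerivWithinAt g (g' x) (Icc a b) x)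
    (hg' : ∀ x ∈ Icc a b, HasDerivWithinAt g' (g'' x) (Icc a b) x)
    (hg''c : ContinuousOn g'' (Icc a b)) (hode : ∀ x ∈ Icc a b, -g'' x = Λ * g x) :
    ∫ x in a..b, g' x ^ 2 = Λ * (∫ x in a..b, g x ^ 2) + (g b * g' b - g a * g' a) := by
  have hgc : ContinuousOn g (Icc a b) := fun x hx ↦ (hg x hx).continuousWithinAt
  have hg'c : ContinuousOn g' (Icc a b) := fun x hx ↦ (hg' x hx).continuousWithinAt
  rw [← uIcc_of_le hab] at hg hg' hgc hg'c hg''c hode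
  have hparts := intervalIntegral.integral_deriv_mul_eq_sub_of_hasDerivWithinAt hg hg'
    hg'c.intervalIntegrable hg''c.intervalIntegrable
  have hintegrand : ∫ x in a..b, g' x * g' x + g x * g'' x
      = ∫ x in a..b, g' x ^ 2 - Λ * g x ^ 2 :=
    intervalIntegral.integral_congr fun x hx ↦ by
      linear_combination (-g x) * hode x hx
  rw [hintegrand, intervalIntegral.integral_sub, intervalIntegral.integral_const_mul] at hparts
  · linarith
  all_goals apply ContinuousOn.intervalIntegrable; fun_prop

theorem integral_deriv_sq_ge_of_riccati {k : ℝ} (hab : a ≤ b)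
    (hg : ∀ x ∈ Icc a b, HasDerivWithinAt g (g' x) (Icc a b) x)
    (hg'c : ContinuousOn g' (Icc a b))
    (hφ : ∀ x ∈ Icc a b, HasDerivWithinAt φ (-k - φ x ^ 2) (Icc a b) x) :
    k * (∫ x in a..b, g x ^ 2) + (φ b * g b ^ 2 - φ a * g a ^ 2) ≤ ∫ x in a..b, g' x ^ 2 := by
  have hgc : ContinuousOn g (Icc a b) := fun x hx ↦ (hg x hx).continuousWithinAt
  have hφc : ContinuousOn φ (Icc a b) := fun x hx ↦ (hφ x hx).continuousWithinAt
  rw [← uIcc_of_le hab] at hg hg'c hgc hφ hφc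
  have hφg : ∀ x ∈ uIcc a b, HasDerivWithinAt (fun x ↦ φ x * g x)
      ((-k - φ x ^ 2) * g x + φ x * g' x) (uIcc a b) x :=
    fun x hx ↦ (hφ x hx).mul (hg x hx)
  have hparts := intervalIntegral.integral_deriv_mul_eq_sub_of_hasDerivWithinAt hφg hg
    (ContinuousOn.intervalIntegrable (by fun_prop)) hg'c.intervalIntegrable
  have hsquare : 0 ≤ ∫ x in a..b, (g' x - φ x * g x) ^ 2 :=
    intervalIntegral.integral_nonneg hab fun x _ ↦ sq_nonneg _
  have hcomplete : ∫ x in a..b, g' x ^ 2 - k * g x ^ 2 = (∫ x in a..b, (g' x - φ x * g x) ^ 2)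
      + ∫ x in a..b, ((-k - φ x ^ 2) * g x + φ x * g' x) * g x + φ x * g x * g' x := by
    rw [← intervalIntegral.integral_add]
    · exact intervalIntegral.integral_congr fun x _ ↦ by ring
    all_goals apply ContinuousOn.intervalIntegrable; fun_prop
  rw [intervalIntegral.integral_sub, intervalIntegral.integral_const_mul, hparts] at hcomplete
  · linarith
  all_goals apply ContinuousOn.intervalIntegrable; fun_prop

end Integrals

theorem hasDerivAt_neg_mul_tan_mul_sub {b c t : ℝ} (h : cos (b * (t - c)) ≠ 0) :
    HasDerivAt (fun t ↦ -b * tan (b * (t - c))) (-b ^ 2 - (-b * tan (b * (t - c))) ^ 2) t := by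
  have hlin : HasDerivAt (fun t ↦ b * (t - c)) b t := by
    simpa using ((hasDerivAt_id t).sub_const c).const_mul b
  refine (((hasDerivAt_tan h).comp t hlin).const_mul (-b)).congr_deriv ?_
  rw [tan_eq_sin_div_cos]
  field_simp
  linear_combination b ^ 2 * sin_sq_add_cos_sq (b * (t - c))

theorem mul_tan_half_le {b : ℝ} (hb0 : 0 ≤ b) (hbπ : b < π) :
    b * tan (b / 2) ≤ π * b ^ 2 / (2 * (π - b)) := by
  have hcos : (π - b) / π ≤ cos (b / 2) := by
    have hjordan := one_sub_mul_le_cos (x := b / 2) (by linarith) (by linarith)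
    have hrewrite : (π - b) / π = 1 - 2 / π * (b / 2) := by field_simp
    linarith
  have hπb : 0 < (π - b) / π := div_pos (by linarith) pi_pos
  calc b * tan (b / 2) = b * sin (b / 2) / cos (b / 2) := by rw [tan_eq_sin_div_cos, mul_div]
    _ ≤ b * (b / 2) / ((π - b) / π) := by
      gcongr
      exact sin_le (by linarith)
    _ = π * b ^ 2 / (2 * (π - b)) := by field_simp

noncomputable def robinRoot (α : ℝ) : ℝ := (-α + √(α ^ 2 + 8 * π ^ 2 * α)) / (4 * π)

theorem robinRoot_nonneg {α : ℝ} (hα : 0 ≤ α) : 0 ≤ robinRoot α := by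
  have hα_le : α ≤ √(α ^ 2 + 8 * π ^ 2 * α) :=
    le_sqrt_of_sq_le (by nlinarith [sq_nonneg π])
  exact div_nonneg (by linarith) (by positivity)

theorem robinRoot_quadratic {α : ℝ} (hα : 0 ≤ α) :
    2 * π * robinRoot α ^ 2 + α * robinRoot α = π * α := by
  have hs := sq_sqrt (show 0 ≤ α ^ 2 + 8 * π ^ 2 * α by positivity)
  unfold robinRoot
  generalize √(α ^ 2 + 8 * π ^ 2 * α) = s at hs ⊢
  field_simp
  linear_combination 2 * hs

theorem lt_pi_of_quadratic {α b : ℝ} (hα : 0 ≤ α) (hb0 : 0 ≤ b)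
    (hq : 2 * π * b ^ 2 + α * b = π * α) : b < π := by
  by_contra! h
  nlinarith [pow_pos pi_pos 3, mul_le_mul_of_nonneg_left (mul_le_mul h h pi_pos.le hb0) pi_pos.le,
    mul_le_mul_of_nonneg_left h hα]

theorem mul_tan_half_le_of_quadratic {α b : ℝ} (hα : 0 ≤ α) (hb0 : 0 ≤ b)
    (hq : 2 * π * b ^ 2 + α * b = π * α) : b * tan (b / 2) ≤ α := by
  have hbπ := lt_pi_of_quadratic hα hb0 hq
  calc b * tan (b / 2) ≤ π * b ^ 2 / (2 * (π - b)) := mul_tan_half_le hb0 hbπ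
    _ ≤ α := by
      rw [div_le_iff₀ (by linarith)]
      nlinarith [mul_nonneg pi_pos.le (sq_nonneg b)]

/-- Any eigenvalue `Λ` of the Sturm–Liouville problem `-g'' = Λ g` on `[0,1]`
with Robin boundary conditions `-g'(0) + α g(0) = 0` and `g'(1) + α g(1) = 0`
(with `g` twice continuously differentiable and not identically zero, `α ≥ 0`)
satisfies `Λ ≥ ((-α + √(α² + 8π²α)) / (4π))²`. -/
theorem robin_eigenvalue_lower_bound
    (α : ℝ) (hα : 0 ≤ α)
    (g g' g'' : ℝ → ℝ) (Λ : ℝ)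
    (hg' : ∀ z ∈ Icc (0 : ℝ) 1, HasDerivWithinAt g (g' z) (Icc (0 : ℝ) 1) z)
    (hg'' : ∀ z ∈ Icc (0 : ℝ) 1, HasDerivWithinAt g' (g'' z) (Icc (0 : ℝ) 1) z)
    (hg''cont : ContinuousOn g'' (Icc (0 : ℝ) 1))
    (hne : ∃ z ∈ Icc (0 : ℝ) 1, g z ≠ 0)
    (hode : ∀ z ∈ Icc (0 : ℝ) 1, -(g'' z) = Λ * g z)
    (hbc0 : -(g' 0) + α * g 0 = 0)
    (hbc1 : g' 1 + α * g 1 = 0) :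
    Λ ≥ ((-α + Real.sqrt (α ^ 2 + 8 * π ^ 2 * α)) / (4 * π)) ^ 2 := by
  change robinRoot α ^ 2 ≤ Λ
  set b := robinRoot α
  have hb0 : 0 ≤ b := robinRoot_nonneg hα
  have hbπ : b < π := lt_pi_of_quadratic hα hb0 (robinRoot_quadratic hα)
  have htan : b * tan (b / 2) ≤ α := mul_tan_half_le_of_quadratic hα hb0 (robinRoot_quadratic hα)
  set φ : ℝ → ℝ := fun t ↦ -b * tan (b * (t - 1 / 2))
  have hφ : ∀ t ∈ Icc (0 : ℝ) 1, HasDerivWithinAt φ (-b ^ 2 - φ t ^ 2) (Icc 0 1) t := by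
    rintro t ⟨ht0, ht1⟩
    refine (hasDerivAt_neg_mul_tan_mul_sub (cos_pos_of_mem_Ioo ⟨?_, ?_⟩).ne').hasDerivWithinAt
    · linarith [mul_nonneg hb0 ht0]
    · linarith [mul_nonneg hb0 (sub_nonneg.2 ht1)]
  have hφ0 : φ 0 = b * tan (b / 2) := by
    simp only [φ, show b * ((0 : ℝ) - 1 / 2) = -(b / 2) by ring, tan_neg]; ring
  have hφ1 : φ 1 = -(b * tan (b / 2)) := by
    simp only [φ, show b * ((1 : ℝ) - 1 / 2) = b / 2 by ring]; ring
  have henergy := integral_deriv_sq_eq_of_neg_deriv2_eq zero_le_one hg' hg'' hg''cont hode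
  have hriccati := integral_deriv_sq_ge_of_riccati zero_le_one hg'
    (fun x hx ↦ (hg'' x hx).continuousWithinAt) hφ
  have hpos : 0 < ∫ x in (0 : ℝ)..1, g x ^ 2 := by
    obtain ⟨z₀, hz₀, hgz₀⟩ := hne
    exact intervalIntegral.integral_pos zero_lt_one
      (fun x hx ↦ ((hg' x hx).continuousWithinAt.pow 2))
      (fun x _ ↦ sq_nonneg _) ⟨z₀, hz₀, by positivity⟩
  refine le_of_mul_le_mul_right ?_ hpos
  have hboundary : g 1 * g' 1 - g 0 * g' 0 = -(α * (g 0 ^ 2 + g 1 ^ 2)) := by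
    linear_combination g 1 * hbc1 + g 0 * hbc0
  rw [hφ0, hφ1] at hriccati
  linarith [mul_le_mul_of_nonneg_right htan (sq_nonneg (g 0)),
    mul_le_mul_of_nonneg_right htan (sq_nonneg (g 1))]
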